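/- arXiv:1507.04536 — 3 statements merged into one kernel-verified Lean document; each statement's English description precedes it below -/
import Mathlib

section
/- Let P ⊂ ℝ^n_{≥0} be a bounded convex set and 𝒫 = (⋃_{j∈ℕ} jP) ∩ ℕ^n its polytope semigroup. For a nonzero x ∈ ℕ^n lying on a ray τ through the origin, suppose τ ∩ P equals the segment from A to B with 0 < ‖A‖ ≤ ‖B‖ (A, B ∈ ℝ^n, both on τ). Then x ∈ 𝒫 if and only if there exists k ∈ ℕ with ‖x‖/‖B‖ ≤ k ≤ ‖x‖/‖A‖. -/
/-!
The ray through `x` meets `P` exactly in `{t • x | a ≤ t ≤ b}`, where `A = a • x` and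
`B = b • x`. For `j ≥ 1`, `x ∈ jP` means `j⁻¹ • x ∈ P`, i.e. `a ≤ 1/j ≤ b`, i.e.
`1/b ≤ j ≤ 1/a`; and `‖x‖/‖B‖ = 1/b`, `‖x‖/‖A‖ = 1/a`.
-/

open Pointwise

/-- The `j`-th dilate of a set, with the convention `0 • P = {0}`. -/
def dil {V : Type*} [AddCommMonoid V] [Module ℝ V] (j : ℕ) (P : Set V) : Set V :=
  if j = 0 then {0} else ((j : ℝ) • P : Set V)

open Set

theorem mem_iUnion_dil_iff_inv_smul_mem {V : Type*} [AddCommGroup V] [Module ℝ V]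
    {P : Set V} {v : V} (hv : v ≠ 0) :
    v ∈ ⋃ j : ℕ, dil j P ↔ ∃ k : ℕ, 0 < k ∧ (k : ℝ)⁻¹ • v ∈ P := by
  simp only [mem_iUnion, dil]
  refine exists_congr fun k => ?_
  rcases Nat.eq_zero_or_pos k with rfl | hk
  · simp [hv]
  · rw [if_neg hk.ne', mem_smul_set_iff_inv_smul_mem₀ (by positivity)]
    exact (and_iff_right hk).symm

theorem smul_mem_segment_smul_iff {𝕜 E : Type*} [Field 𝕜] [LinearOrder 𝕜]
    [IsStrictOrderedRing 𝕜] [AddCommGroup E] [Module 𝕜 E] [NoZeroSMulDivisors 𝕜 E]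
    {v : E} (hv : v ≠ 0) {a b t : 𝕜} :
    t • v ∈ segment 𝕜 (a • v) (b • v) ↔ t ∈ uIcc a b := by
  have h := image_segment 𝕜 (LinearMap.toSpanSingleton 𝕜 E v).toAffineMap a b
  simp only [LinearMap.coe_toAffineMap, LinearMap.toSpanSingleton_apply] at h
  rw [← h, (smul_left_injective 𝕜 hv).mem_set_image, segment_eq_uIcc]

theorem exists_nat_inv_mem_Icc_iff {a b : ℝ} (ha : 0 < a) (hab : a ≤ b) :
    (∃ k : ℕ, 0 < k ∧ (k : ℝ)⁻¹ ∈ Icc a b) ↔ ∃ k : ℕ, b⁻¹ ≤ k ∧ (k : ℝ) ≤ a⁻¹ := by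
  have hb := ha.trans_le hab
  refine exists_congr fun k => ?_
  rcases Nat.eq_zero_or_pos k with rfl | hk
  · simp [hb]
  · have hk' : (0 : ℝ) < k := by exact_mod_cast hk
    rw [mem_Icc, le_inv_comm₀ ha hk', inv_le_comm₀ hk' hb]
    simp [hk, and_comm]

theorem mem_iUnion_dil_iff_of_ray_inter_eq_segment {V : Type*} [AddCommGroup V]
    [Module ℝ V] {P : Set V} {v : V} (hv : v ≠ 0) {a b : ℝ} (ha : 0 < a) (hab : a ≤ b)
    (hseg : {y | ∃ t : ℝ, 0 ≤ t ∧ y = t • v} ∩ P = segment ℝ (a • v) (b • v)) :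
    v ∈ ⋃ j : ℕ, dil j P ↔ ∃ k : ℕ, b⁻¹ ≤ k ∧ (k : ℝ) ≤ a⁻¹ := by
  rw [mem_iUnion_dil_iff_inv_smul_mem hv, ← exists_nat_inv_mem_Icc_iff ha hab]
  refine exists_congr fun k => and_congr_right fun _ => ?_
  have hray : (k : ℝ)⁻¹ • v ∈ P ↔ (k : ℝ)⁻¹ • v ∈ {y | ∃ t : ℝ, 0 ≤ t ∧ y = t • v} ∩ P :=
    ⟨fun h => ⟨⟨_, by positivity, rfl⟩, h⟩, And.right⟩
  rw [hray, hseg, smul_mem_segment_smul_iff hv, uIcc_of_le hab]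

theorem stmt2_general {n : ℕ} (P : Set (EuclideanSpace ℝ (Fin n)))
    (xe : EuclideanSpace ℝ (Fin n))
    (A B : EuclideanSpace ℝ (Fin n)) (hA : 0 < ‖A‖) (hAB : ‖A‖ ≤ ‖B‖)
    (hAτ : ∃ t : ℝ, 0 ≤ t ∧ A = t • xe) (hBτ : ∃ t : ℝ, 0 ≤ t ∧ B = t • xe)
    (hseg : {y : EuclideanSpace ℝ (Fin n) | ∃ t : ℝ, 0 ≤ t ∧ y = t • xe} ∩ P
      = segment ℝ A B) :
    xe ∈ (⋃ j : ℕ, dil j P) ↔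
      ∃ k : ℕ, ‖xe‖ / ‖B‖ ≤ (k : ℝ) ∧ (k : ℝ) ≤ ‖xe‖ / ‖A‖ := by
  obtain ⟨a, ha0, rfl⟩ := hAτ
  obtain ⟨b, hb0, rfl⟩ := hBτ
  have hx : xe ≠ 0 := by
    rintro rfl
    simp at hA
  have hxn : 0 < ‖xe‖ := norm_pos_iff.mpr hx
  simp only [norm_smul, Real.norm_of_nonneg ha0, Real.norm_of_nonneg hb0] at hA hAB ⊢
  have ha : 0 < a := pos_of_mul_pos_left hA hxn.le
  have hab : a ≤ b := le_of_mul_le_mul_right hAB hxn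
  simp only [div_mul_cancel_right₀ hxn.ne']
  exact mem_iUnion_dil_iff_of_ray_inter_eq_segment hx ha hab hseg

/-- Membership criterion for the polytope semigroup: if the ray through a nonzero
integer point `x` meets `P` in the segment from `A` to `B` with `0 < ‖A‖ ≤ ‖B‖`,
then `x ∈ 𝒫` iff some natural `k` satisfies `‖x‖/‖B‖ ≤ k ≤ ‖x‖/‖A‖`. -/
theorem stmt2 {n : ℕ} (P : Set (EuclideanSpace ℝ (Fin n)))
    (hP : P ⊆ {x | ∀ i, 0 ≤ x i}) (hconv : Convex ℝ P)
    (hbd : Bornology.IsBounded P)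
    (x : Fin n → ℕ) (xe : EuclideanSpace ℝ (Fin n)) (hxe : ∀ i, xe i = (x i : ℝ))
    (hx : xe ≠ 0)
    (A B : EuclideanSpace ℝ (Fin n)) (hA : 0 < ‖A‖) (hAB : ‖A‖ ≤ ‖B‖)
    (hAτ : ∃ t : ℝ, 0 ≤ t ∧ A = t • xe) (hBτ : ∃ t : ℝ, 0 ≤ t ∧ B = t • xe)
    (hseg : {y : EuclideanSpace ℝ (Fin n) | ∃ t : ℝ, 0 ≤ t ∧ y = t • xe} ∩ P
      = segment ℝ A B) :
    xe ∈ (⋃ j : ℕ, dil j P) ↔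
      ∃ k : ℕ, ‖xe‖ / ‖B‖ ≤ (k : ℝ) ∧ (k : ℝ) ≤ ‖xe‖ / ‖A‖ :=
  stmt2_general P xe A B hA hAB hAτ hBτ hseg
end

section
/- Let S ⊆ ℕ^n be a submonoid and let g₁,…,g_n ∈ S be linearly independent over ℝ with cone(S) = cone{g₁,…,g_n} (S is simplicial). The following are equivalent: (a) for all α, β ∈ S and all i ≠ j in {1,…,n}, if α + g_i = β + g_j then there exists s ∈ S with s = α − g_j = β − g_i (as elements of ℤ^n); (b) for all a ∈ (cone{g₁,…,g_n} ∩ ℕ^n) \ S and all i ≠ j in {1,…,n}, not both a + g_i ∈ S and a + g_j ∈ S. -/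
/-!
Since `g₁, …, g_n` are linearly independent and `S` lies in their cone, every element of `S` has
unique nonnegative coordinates with respect to the `g_k`. If `α + g_i = β + g_j` with `i ≠ j`,
comparing coordinates gives `c_j(α) = c_j(β) + 1 ≥ 1`, so `a = α - g_j` lies in the cone and in
`ℕ^n`, and (b) forces `a ∈ S`. Conversely, if `a ∉ S` but `a + g_i, a + g_j ∈ S`, then (a) applied
to `α = a + g_j`, `β = a + g_i` can only return `a` itself.
-/

/-- The cone of nonnegative real linear combinations of elements of `A`. -/
def coneOf {V : Type*} [AddCommMonoid V] [Module ℝ V] (A : Set V) : Set V :=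
  {x | ∃ (s : Finset V) (c : V → ℝ),
    (∀ v ∈ s, 0 ≤ c v ∧ v ∈ A) ∧ x = ∑ v ∈ s, c v • v}

/-- Coordinatewise embedding `ℕ^n → ℝ^n`. -/
def toR {n : ℕ} (a : Fin n → ℕ) : Fin n → ℝ := fun i => a i

section Cone

variable {V : Type*} [AddCommGroup V] [Module ℝ V]

theorem subset_coneOf (A : Set V) : A ⊆ coneOf A :=
  fun x hx => ⟨{x}, fun _ => 1, by simpa using hx, by simp⟩

theorem nonneg_of_mem_coneOf [PartialOrder V] [IsOrderedAddMonoid V] [PosSMulMono ℝ V]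
    {A : Set V} (hA : ∀ v ∈ A, 0 ≤ v) {x : V} (hx : x ∈ coneOf A) : 0 ≤ x := by
  obtain ⟨s, c, hs, rfl⟩ := hx
  exact Finset.sum_nonneg fun v hv => smul_nonneg (hs v hv).1 (hA v (hs v hv).2)

theorem mem_coneOf_range_iff {ι : Type*} [Fintype ι] {v : ι → V} (hv : Function.Injective v)
    {x : V} : x ∈ coneOf (Set.range v) ↔ ∃ c : ι → ℝ, (∀ i, 0 ≤ c i) ∧ x = ∑ i, c i • v i := by
  classical
  constructor
  · rintro ⟨s, c, hs, rfl⟩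
    refine ⟨fun i => if v i ∈ s then c (v i) else 0, fun i => ?_, ?_⟩
    · dsimp only
      split_ifs with h
      exacts [(hs _ h).1, le_rfl]
    · rw [← Finset.sum_preimage v s hv.injOn (fun w => c w • w)
        fun w hw hn => (hn (hs w hw).2).elim]
      simp only [ite_smul, zero_smul, ← Finset.sum_filter]
      congr 1
      ext
      simp
  · rintro ⟨c, hc, rfl⟩
    refine ⟨Finset.univ.image v, Function.extend v c 0, ?_, ?_⟩
    · simp only [Finset.mem_image, Finset.mem_univ, true_and]
      rintro _ ⟨i, rfl⟩
      exact ⟨hv.extend_apply c 0 i ▸ hc i, i, rfl⟩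
    · rw [Finset.sum_image hv.injOn]
      simp only [hv.extend_apply]

theorem sub_mem_coneOf_range_of_add_eq {ι : Type*} [Fintype ι] [DecidableEq ι] {v : ι → V}
    (hv : LinearIndependent ℝ v) {x y : V} (hx : x ∈ coneOf (Set.range v))
    (hy : y ∈ coneOf (Set.range v)) {i j : ι} (hij : i ≠ j) (h : x + v i = y + v j) :
    x - v j ∈ coneOf (Set.range v) := by
  obtain ⟨c, hc, rfl⟩ := (mem_coneOf_range_iff hv.injective).mp hx
  obtain ⟨d, hd, rfl⟩ := (mem_coneOf_range_iff hv.injective).mp hy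
  have hsingle : ∀ k, v k = ∑ l, (Pi.single k 1 : ι → ℝ) l • v l := fun k => by
    simp [Pi.single_apply]
  have hcj : c j = d j + 1 := by
    rw [hsingle i, hsingle j, ← Finset.sum_add_distrib, ← Finset.sum_add_distrib] at h
    simp only [← add_smul] at h
    simpa [hij.symm] using hv.eq_coords_of_eq h j
  rw [mem_coneOf_range_iff hv.injective]
  refine ⟨c - (Pi.single j 1 : ι → ℝ), fun k => ?_, ?_⟩
  · rcases eq_or_ne k j with rfl | hk
    · simpa [hcj] using hd k
    · simpa [hk] using hc k
  · simp only [Pi.sub_apply, sub_smul, Finset.sum_sub_distrib, ← hsingle]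

end Cone

section ToR

variable {n : ℕ}

theorem toR_add (a b : Fin n → ℕ) : toR (a + b) = toR a + toR b := by
  funext t; simp [toR]

theorem toR_sub {a b : Fin n → ℕ} (h : b ≤ a) : toR (a - b) = toR a - toR b := by
  funext t; simp [toR, Nat.cast_sub (h t)]

theorem toR_le_toR_iff {a b : Fin n → ℕ} : toR a ≤ toR b ↔ a ≤ b := by
  simp only [Pi.le_def, toR, Nat.cast_le]

theorem toR_nonneg (a : Fin n → ℕ) : 0 ≤ toR a :=
  fun t => Nat.cast_nonneg (a t)

end ToR

theorem stmt4_general {n : ℕ} (S : Set (Fin n → ℕ))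
    (g : Fin n → Fin n → ℕ)
    (hind : LinearIndependent ℝ (fun i => toR (g i)))
    (hcone : coneOf (toR '' S) = coneOf (toR '' Set.range g)) :
    (∀ α ∈ S, ∀ β ∈ S, ∀ i j : Fin n, i ≠ j → α + g i = β + g j →
        ∃ s ∈ S, s + g j = α ∧ s + g i = β) ↔
    (∀ a : Fin n → ℕ, toR a ∈ coneOf (toR '' Set.range g) → a ∉ S →
        ∀ i j : Fin n, i ≠ j → ¬(a + g i ∈ S ∧ a + g j ∈ S)) := by
  rw [← Set.range_comp'] at hcone ⊢
  constructor
  · rintro h a - haS i j hij ⟨hai, haj⟩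
    obtain ⟨s, hs, hsa, -⟩ := h _ haj _ hai i j hij (add_right_comm a (g j) (g i))
    exact haS (add_right_cancel hsa ▸ hs)
  · intro h α hα β hβ i j hij hαβ
    have hmem : ∀ a ∈ S, toR a ∈ coneOf (Set.range fun i => toR (g i)) :=
      fun a ha => hcone ▸ subset_coneOf _ (Set.mem_image_of_mem toR ha)
    have hsub := sub_mem_coneOf_range_of_add_eq hind (hmem α hα) (hmem β hβ) hij
      (by simpa only [toR_add] using congrArg toR hαβ)
    have hle : g j ≤ α := toR_le_toR_iff.mp <| sub_nonneg.mp <|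
      nonneg_of_mem_coneOf (by rintro _ ⟨k, rfl⟩; exact toR_nonneg (g k)) hsub
    have haj : α - g j + g j = α := tsub_add_cancel_of_le hle
    have hai : α - g j + g i = β := add_right_cancel (by rw [add_right_comm, haj, hαβ])
    refine ⟨α - g j, ?_, haj, hai⟩
    by_contra haS
    exact h _ (toR_sub hle ▸ hsub) haS i j hij ⟨hai.symm ▸ hβ, haj.symm ▸ hα⟩

/-- Combinatorial Cohen–Macaulay criterion (Theorem 3.1, (2) ⇔ (3)) for a simplicial
submonoid `S ⊆ ℕ^n` with extremal generators `g₁, …, g_n`. -/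
theorem stmt4 {n : ℕ} (S : Set (Fin n → ℕ))
    (h0 : (0 : Fin n → ℕ) ∈ S) (hadd : ∀ a ∈ S, ∀ b ∈ S, a + b ∈ S)
    (g : Fin n → Fin n → ℕ) (hg : ∀ i, g i ∈ S)
    (hind : LinearIndependent ℝ (fun i => toR (g i)))
    (hcone : coneOf (toR '' S) = coneOf (toR '' Set.range g)) :
    (∀ α ∈ S, ∀ β ∈ S, ∀ i j : Fin n, i ≠ j → α + g i = β + g j →
        ∃ s ∈ S, s + g j = α ∧ s + g i = β) ↔
    (∀ a : Fin n → ℕ, toR a ∈ coneOf (toR '' Set.range g) → a ∉ S →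
        ∀ i j : Fin n, i ≠ j → ¬(a + g i ∈ S ∧ a + g j ∈ S)) :=
  stmt4_general S g hind hcone
end

section
/- Let k ≥ 2 be an integer and let P ⊂ ℝ^3 be the tetrahedron with vertices (4,0,0), (4+2k,0,0), (4+k,k,0), (4+k,0,1), and 𝒫 = (⋃_{j∈ℕ} jP) ∩ ℕ^3. For every p = (p₁,p₂,p₃) ∈ 𝒫 with p₃ > 0, the element p − (4+k,0,1) belongs to 𝒫. -/
open Pointwise

open Classical in
lemma hull4' {E : Type*} [AddCommGroup E] [Module ℝ E] (A B C D x : E)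
    (hAB : A ≠ B) (hAC : A ≠ C) (hAD : A ≠ D) (hBC : B ≠ C) (hBD : B ≠ D) (hCD : C ≠ D) :
    x ∈ convexHull ℝ ({A, B, C, D} : Set E) ↔
      ∃ a b c d : ℝ, 0 ≤ a ∧ 0 ≤ b ∧ 0 ≤ c ∧ 0 ≤ d ∧ a + b + c + d = 1 ∧
        a • A + b • B + c • C + d • D = x := by
  have hset : (({A, B, C, D} : Finset E) : Set E) = ({A, B, C, D} : Set E) := by
    simp
  have hins : ({A, B, C, D} : Finset E) = insert A (insert B (insert C {D})) := rfl
  rw [← hset, Finset.mem_convexHull']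
  constructor
  · rintro ⟨w, hw0, hw1, hwx⟩
    rw [hins, Finset.sum_insert (by simp [hAB, hAC, hAD]),
        Finset.sum_insert (by simp [hBC, hBD]),
        Finset.sum_insert (by simp [hCD]), Finset.sum_singleton] at hw1 hwx
    refine ⟨w A, w B, w C, w D, ?_, ?_, ?_, ?_, by linarith, by rw [← hwx]; abel⟩ <;>
      (apply hw0; simp)
  · rintro ⟨a, b, c, d, ha, hb, hc, hd, hsum, hx⟩
    refine ⟨fun y => if y = A then a else if y = B then b else if y = C then c else d,
      ?_, ?_, ?_⟩
    · intro y hy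
      dsimp only
      split_ifs <;> assumption
    · rw [hins, Finset.sum_insert (by simp [hAB, hAC, hAD]),
        Finset.sum_insert (by simp [hBC, hBD]),
        Finset.sum_insert (by simp [hCD]), Finset.sum_singleton]
      simp [Ne.symm hAB, Ne.symm hAC, Ne.symm hAD, Ne.symm hBC, Ne.symm hBD, Ne.symm hCD]
      linarith
    · rw [hins, Finset.sum_insert (by simp [hAB, hAC, hAD]),
        Finset.sum_insert (by simp [hBC, hBD]),
        Finset.sum_insert (by simp [hCD]), Finset.sum_singleton]
      simp [Ne.symm hAB, Ne.symm hAC, Ne.symm hAD, Ne.symm hBC, Ne.symm hBD, Ne.symm hCD]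
      rw [← hx]; abel

lemma cone4 {E : Type*} [AddCommGroup E] [Module ℝ E] (A B C D x : E)
    (hAB : A ≠ B) (hAC : A ≠ C) (hAD : A ≠ D) (hBC : B ≠ C) (hBD : B ≠ D) (hCD : C ≠ D) :
    x ∈ (⋃ j : ℕ, dil j (convexHull ℝ ({A, B, C, D} : Set E))) ↔
      ∃ a b c d : ℝ, 0 ≤ a ∧ 0 ≤ b ∧ 0 ≤ c ∧ 0 ≤ d ∧ (∃ j : ℕ, a + b + c + d = j) ∧
        a • A + b • B + c • C + d • D = x := by
  constructor
  · intro hx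
    rw [Set.mem_iUnion] at hx
    obtain ⟨j, hj⟩ := hx
    by_cases hj0 : j = 0
    · subst hj0
      simp only [dil, ↓reduceIte, Set.mem_singleton_iff] at hj
      exact ⟨0, 0, 0, 0, le_refl _, le_refl _, le_refl _, le_refl _, ⟨0, by simp⟩,
        by simp [hj]⟩
    · simp only [dil, if_neg hj0] at hj
      obtain ⟨y, hy, rfl⟩ := hj
      rw [hull4' A B C D y hAB hAC hAD hBC hBD hCD] at hy
      obtain ⟨a, b, c, d, ha, hb, hc, hd, hsum, hy⟩ := hy
      have hjpos : (0:ℝ) ≤ j := by positivity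
      refine ⟨j * a, j * b, j * c, j * d, by positivity, by positivity, by positivity,
        by positivity, ⟨j, by push_cast; nlinarith⟩, ?_⟩
      rw [← hy]
      simp only [smul_add, smul_smul]
  · rintro ⟨a, b, c, d, ha, hb, hc, hd, ⟨j, hsum⟩, hx⟩
    rw [Set.mem_iUnion]
    refine ⟨j, ?_⟩
    by_cases hj0 : j = 0
    · subst hj0
      simp only [Nat.cast_zero] at hsum
      have ha0 : a = 0 := by linarith
      have hb0 : b = 0 := by linarith
      have hc0 : c = 0 := by linarith
      have hd0 : d = 0 := by linarith
      simp only [dil, ↓reduceIte, Set.mem_singleton_iff]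
      rw [← hx, ha0, hb0, hc0, hd0]; simp
    · simp only [dil, if_neg hj0]
      have hjpos : (0:ℝ) < j := by
        have : 1 ≤ j := Nat.one_le_iff_ne_zero.mpr hj0
        exact_mod_cast Nat.cast_pos.mpr this
      refine ⟨(a/j) • A + (b/j) • B + (c/j) • C + (d/j) • D, ?_, ?_⟩
      · rw [hull4' A B C D _ hAB hAC hAD hBC hBD hCD]
        exact ⟨a/j, b/j, c/j, d/j, by positivity, by positivity, by positivity,
          by positivity, by field_simp; linarith, rfl⟩
      · rw [← hx]
        simp only [smul_add, smul_smul]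
        rw [mul_div_cancel₀ _ (ne_of_gt hjpos), mul_div_cancel₀ _ (ne_of_gt hjpos),
          mul_div_cancel₀ _ (ne_of_gt hjpos), mul_div_cancel₀ _ (ne_of_gt hjpos)]

/-- Lemma 5.2: for the tetrahedron with vertices `(4,0,0)`, `(4+2k,0,0)`, `(4+k,k,0)`,
`(4+k,0,1)` (`k ≥ 2`), every element `p` of the associated semigroup with `p₃ > 0`
satisfies `p − (4+k,0,1) ∈ 𝒫` (with nonnegative coordinates). -/
theorem stmt11 (k : ℕ) (hk : 2 ≤ k)
    (P : Set (Fin 3 → ℝ))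
    (hPdef : P = convexHull ℝ
      {![4,0,0], ![4+2*(k:ℝ),0,0], ![4+(k:ℝ),(k:ℝ),0], ![4+(k:ℝ),0,1]})
    (p : Fin 3 → ℕ)
    (hp : (fun i => (p i : ℝ)) ∈ ⋃ j : ℕ, dil j P)
    (hp3 : 0 < p 2) :
    ∃ q : Fin 3 → ℕ, q + ![4+k,0,1] = p ∧
      (fun i => (q i : ℝ)) ∈ ⋃ j : ℕ, dil j P := by
  have hk' : (2:ℝ) ≤ (k:ℝ) := by exact_mod_cast hk
  set A : Fin 3 → ℝ := ![4,0,0] with hA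
  set B : Fin 3 → ℝ := ![4+2*(k:ℝ),0,0] with hB
  set C : Fin 3 → ℝ := ![4+(k:ℝ),(k:ℝ),0] with hC
  set D : Fin 3 → ℝ := ![4+(k:ℝ),0,1] with hD
  have hAB : A ≠ B := fun h => by
    have := congrFun h 0; simp [hA, hB] at this; linarith
  have hAC : A ≠ C := fun h => by
    have := congrFun h 1; simp [hA, hC] at this; linarith
  have hAD : A ≠ D := fun h => by
    have := congrFun h 2; simp [hA, hD] at this
  have hBC : B ≠ C := fun h => by
    have := congrFun h 1; simp [hB, hC] at this; linarith
  have hBD : B ≠ D := fun h => by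
    have := congrFun h 2; simp [hB, hD] at this
  have hCD : C ≠ D := fun h => by
    have := congrFun h 1; simp [hC, hD] at this; linarith
  rw [hPdef] at hp ⊢
  rw [cone4 A B C D _ hAB hAC hAD hBC hBD hCD] at hp
  obtain ⟨a, b, c, d, ha, hb, hc, hd, ⟨j, hsum⟩, hx⟩ := hp
  have h0 := congrFun hx 0
  have h1 := congrFun hx 1
  have h2 := congrFun hx 2
  simp only [hA, hB, hC, hD, Pi.add_apply, Pi.smul_apply, smul_eq_mul,
    Matrix.cons_val_zero, Matrix.cons_val_one, Matrix.head_cons,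
    Matrix.cons_val_two, Matrix.tail_cons] at h0 h1 h2
  -- h2 : d = p 2
  have hd1 : (1:ℝ) ≤ d := by
    have : (1:ℕ) ≤ p 2 := hp3
    have : (1:ℝ) ≤ (p 2 : ℝ) := by exact_mod_cast this
    linarith
  have hj1 : 1 ≤ j := by
    have : (1:ℝ) ≤ (j:ℝ) := by linarith
    exact_mod_cast this
  have hp0 : 4 + k ≤ p 0 := by
    have : (4:ℝ) + (k:ℝ) ≤ (p 0 : ℝ) := by nlinarith
    exact_mod_cast this
  refine ⟨![p 0 - (4+k), p 1, p 2 - 1], ?_, ?_⟩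
  · funext i
    fin_cases i <;>
      simp [Nat.sub_add_cancel hp0, Nat.sub_add_cancel hp3]
  · rw [cone4 A B C D _ hAB hAC hAD hBC hBD hCD]
    refine ⟨a, b, c, d - 1, ha, hb, hc, by linarith, ⟨j - 1, ?_⟩, ?_⟩
    · rw [Nat.cast_sub hj1]; push_cast; linarith
    · funext i
      fin_cases i <;>
        · simp [hA, hB, hC, hD, Nat.cast_sub hp0, Nat.cast_sub hp3]
          push_cast
          linarith
end
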